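/- arXiv:1311.0128 — 3 statements merged into one kernel-verified Lean document; each statement's English description precedes it below -/
import Mathlib

section
/- Let λ, c > 0. Define u : ℝ³ × (0,∞) → ℝ on the open cone {(x,t) : ‖x‖ < ct, t > 0} by u(x,t) = (e^{−λt}/π) (λ/(2c))² · I₁((λ/c)√(c²t² − ‖x‖²)) / √(c²t² − ‖x‖²). Then u satisfies the three-dimensional telegraph equation ∂²u/∂t² + 2λ ∂u/∂t − c² Δu = 0 on the open cone, where Δ = Σ_{j=1}^3 ∂²/∂x_j². -/
/-!
Writing `I₁(x) = (x/2) G(x²/4)` with the entire series `G(z) = ∑ zᵏ / (k! (k+1)!)`, the density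
is `u = K e^{-λt} G(q (c²t² - ‖x‖²))` with `q = (λ/2c)²` near every point of the cone, and the
right-hand side is smooth everywhere. For any profile `g` and `λ² = 4qc²`, the telegraph operator
in dimension `n` sends `e^{-λt} g(q (c²t² - ‖x‖²))` to
`4qc² e^{-λt} (z g''(z) + (n+1)/2 g'(z) - g(z))` at `z = q (c²t² - ‖x‖²)`, and `G` solves
`z G'' + 2 G' = G` since `(k+1)(k+2) / ((k+1)! (k+2)!) = 1 / (k! (k+1)!)`.
-/

open Real

/-- The modified Bessel function of order one,
`I₁(x) = Σ_{k=0}^∞ (x/2)^{2k+1} / (k! (k+1)!)`. -/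
noncomputable def besselI1 (x : ℝ) : ℝ :=
  ∑' k : ℕ, (x / 2) ^ (2 * k + 1) / ((k.factorial : ℝ) * ((k + 1).factorial : ℝ))

open Nat Filter Topology

noncomputable def powSeries (a : ℕ → ℝ) (z : ℝ) : ℝ := ∑' k, a k * z ^ k

def derivCoeff (a : ℕ → ℝ) (k : ℕ) : ℝ := (k + 1) * a (k + 1)

section ExponentialType

variable {a : ℕ → ℝ} {C r : ℝ}

lemma abs_derivCoeff_le (ha : ∀ k, |a k| ≤ C * r ^ k / k !) (k : ℕ) :
    |derivCoeff a k| ≤ C * r * r ^ k / k ! := by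
  rw [derivCoeff, abs_mul, abs_of_nonneg (by positivity)]
  calc ((k : ℝ) + 1) * |a (k + 1)| ≤ (k + 1) * (C * r ^ (k + 1) / (k + 1)!) := by
        gcongr; exact ha _
    _ = C * r * r ^ k / k ! := by
        rw [Nat.factorial_succ]; push_cast; field_simp; ring

lemma summable_abs_mul_pow (ha : ∀ k, |a k| ≤ C * r ^ k / k !) (w : ℝ) :
    Summable fun k => |a k * w ^ k| := by
  refine .of_nonneg_of_le (fun k => abs_nonneg _) (fun k => ?_)
    ((Real.summable_pow_div_factorial (r * |w|)).mul_left C)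
  calc |a k * w ^ k| = |a k| * |w| ^ k := by rw [abs_mul, abs_pow]
    _ ≤ C * r ^ k / k ! * |w| ^ k := by gcongr; exact ha k
    _ = C * ((r * |w|) ^ k / k !) := by ring

lemma hasDerivAt_powSeries (ha : ∀ k, |a k| ≤ C * r ^ k / k !) (w : ℝ) :
    HasDerivAt (powSeries a) (powSeries (derivCoeff a) w) w := by
  have hshift (y : ℝ) (k : ℕ) :
      a (k + 1) * ((k + 1 : ℕ) * y ^ (k + 1 - 1)) = derivCoeff a k * y ^ k := by
    simp only [derivCoeff, Nat.add_sub_cancel]; push_cast; ring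
  have hderiv_summable (y : ℝ) : Summable fun k => |a k * (k * y ^ (k - 1))| :=
    (summable_nat_add_iff 1).mp <| by
      simpa only [hshift] using summable_abs_mul_pow (abs_derivCoeff_le ha) y
  have hw : w ∈ Metric.ball (0 : ℝ) (|w| + 1) := by simp
  have hder := hasDerivAt_tsum_of_isPreconnected (hderiv_summable (|w| + 1)) Metric.isOpen_ball
    (convex_ball (0 : ℝ) (|w| + 1)).isPreconnected
    (fun k y _ => (hasDerivAt_pow k y).const_mul (a k)) (fun k y hy => ?_) hw
    (summable_abs_mul_pow ha w).of_abs hw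
  · rw [(hderiv_summable w).of_abs.tsum_eq_zero_add] at hder
    simp only [hshift, Nat.cast_zero, zero_mul, mul_zero, zero_add] at hder
    exact hder
  · rw [mem_ball_zero_iff, Real.norm_eq_abs] at hy
    simp only [norm_mul, norm_pow, Real.norm_eq_abs, abs_mul, Nat.abs_cast, abs_pow]
    rw [abs_of_pos (by positivity : (0 : ℝ) < |w| + 1)]
    gcongr

end ExponentialType

noncomputable def besselCoeff (k : ℕ) : ℝ := 1 / (k ! * (k + 1)!)

lemma abs_besselCoeff_le (k : ℕ) : |besselCoeff k| ≤ 1 * 1 ^ k / k ! := by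
  rw [besselCoeff, abs_of_nonneg (by positivity), one_pow, one_mul]
  gcongr
  exact le_mul_of_one_le_right (by positivity) (mod_cast (k + 1).factorial_pos)

lemma besselI1_eq_powSeries (x : ℝ) :
    besselI1 x = x / 2 * powSeries besselCoeff ((x / 2) ^ 2) := by
  rw [besselI1, powSeries, ← tsum_mul_left]
  refine tsum_congr fun k => ?_
  rw [besselCoeff, ← pow_mul, pow_succ]
  ring

lemma besselCoeff_succ (k : ℕ) :
    ((k : ℝ) + 1) * (k + 2) * besselCoeff (k + 1) = besselCoeff k := by
  simp only [besselCoeff, Nat.factorial_succ (k + 1), Nat.factorial_succ k]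
  push_cast
  field_simp
  ring

lemma powSeries_besselCoeff_ode (z : ℝ) :
    z * powSeries (derivCoeff (derivCoeff besselCoeff)) z
      + 2 * powSeries (derivCoeff besselCoeff) z = powSeries besselCoeff z := by
  have hb := (summable_abs_mul_pow abs_besselCoeff_le z).of_abs
  have hd := (summable_abs_mul_pow (abs_derivCoeff_le abs_besselCoeff_le) z).of_abs
  have hdd := (summable_abs_mul_pow
    (abs_derivCoeff_le (abs_derivCoeff_le abs_besselCoeff_le)) z).of_abs
  simp only [powSeries]
  rw [hb.tsum_eq_zero_add, hd.tsum_eq_zero_add, mul_add, ← tsum_mul_left, ← tsum_mul_left,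
    add_left_comm, ← (hdd.mul_left z).tsum_add (((summable_nat_add_iff 1).mpr hd).mul_left 2)]
  congr 1
  · simp [derivCoeff, besselCoeff]
  · refine tsum_congr fun k => ?_
    have hrec := besselCoeff_succ (k + 1)
    simp only [derivCoeff]
    push_cast at hrec ⊢
    linear_combination z ^ (k + 1) * hrec

lemma besselI1_mul_sqrt_div_sqrt (a : ℝ) {w : ℝ} (hw : 0 < w) :
    besselI1 (a * √w) / √w = a / 2 * powSeries besselCoeff ((a / 2) ^ 2 * w) := by
  have hsq : (a * √w / 2) ^ 2 = (a / 2) ^ 2 * w := by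
    rw [mul_div_right_comm, mul_pow, sq_sqrt hw.le]
  rw [besselI1_eq_powSeries, hsq]
  field_simp [(sqrt_pos.mpr hw).ne']

lemma EuclideanSpace.norm_sq_toLp_update {ι : Type*} [Fintype ι] [DecidableEq ι]
    (x : EuclideanSpace ℝ ι) (j : ι) (s : ℝ) :
    ‖WithLp.toLp 2 (Function.update x j s)‖ ^ 2 = ‖x‖ ^ 2 - x j ^ 2 + s ^ 2 := by
  simp only [EuclideanSpace.norm_sq_eq, Real.norm_eq_abs, sq_abs,
    ← Finset.add_sum_erase _ _ (Finset.mem_univ j), Function.update_self]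
  rw [Finset.sum_congr rfl fun i hi => by rw [Function.update_of_ne (Finset.ne_of_mem_erase hi)]]
  ring

lemma iteratedDeriv_two_eq_of_hasDerivAt {f f' f'' : ℝ → ℝ} (hf : ∀ s, HasDerivAt f (f' s) s)
    (hf' : ∀ s, HasDerivAt f' (f'' s) s) (s : ℝ) : iteratedDeriv 2 f s = f'' s := by
  rw [iteratedDeriv_succ, iteratedDeriv_one, funext fun s => (hf s).deriv]
  exact (hf' s).deriv

section QuadraticProfile

variable {g g₁ g₂ : ℝ → ℝ}

lemma hasDerivAt_comp_quadratic (hg : ∀ z, HasDerivAt g (g₁ z) z) (a b s : ℝ) :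
    HasDerivAt (fun s => g (a * s ^ 2 + b)) (2 * a * s * g₁ (a * s ^ 2 + b)) s := by
  have hq : HasDerivAt (fun s => a * s ^ 2 + b) (2 * a * s) s := by
    simpa [mul_comm, mul_left_comm] using ((hasDerivAt_pow 2 s).const_mul a).add_const b
  exact ((hg _).comp s hq).congr_deriv (by ring)

lemma iteratedDeriv_two_comp_quadratic (hg : ∀ z, HasDerivAt g (g₁ z) z)
    (hg₁ : ∀ z, HasDerivAt g₁ (g₂ z) z) (a b s : ℝ) :
    iteratedDeriv 2 (fun s => g (a * s ^ 2 + b)) s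
      = 2 * a * g₁ (a * s ^ 2 + b) + 4 * a ^ 2 * s ^ 2 * g₂ (a * s ^ 2 + b) := by
  refine iteratedDeriv_two_eq_of_hasDerivAt (hasDerivAt_comp_quadratic hg a b)
    (f'' := fun s => 2 * a * g₁ (a * s ^ 2 + b) + 4 * a ^ 2 * s ^ 2 * g₂ (a * s ^ 2 + b))
    (fun s => ?_) s
  exact (((hasDerivAt_id' s).const_mul (2 * a)).fun_mul
    (hasDerivAt_comp_quadratic hg₁ a b s)).congr_deriv (by ring)

lemma hasDerivAt_exp_neg_mul (lam s : ℝ) :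
    HasDerivAt (fun s => exp (-(lam * s))) (-lam * exp (-(lam * s))) s := by
  have h : HasDerivAt (fun s => -(lam * s)) (-lam) s := by
    simpa using ((hasDerivAt_id' s).const_mul lam).fun_neg
  exact h.exp.congr_deriv (mul_comm _ _)

lemma hasDerivAt_exp_mul_comp_quadratic (hg : ∀ z, HasDerivAt g (g₁ z) z) (lam a b s : ℝ) :
    HasDerivAt (fun s => exp (-(lam * s)) * g (a * s ^ 2 + b))
      (exp (-(lam * s)) * (-lam * g (a * s ^ 2 + b) + 2 * a * s * g₁ (a * s ^ 2 + b))) s :=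
  ((hasDerivAt_exp_neg_mul lam s).fun_mul (hasDerivAt_comp_quadratic hg a b s)).congr_deriv
    (by ring)

lemma iteratedDeriv_two_exp_mul_comp_quadratic (hg : ∀ z, HasDerivAt g (g₁ z) z)
    (hg₁ : ∀ z, HasDerivAt g₁ (g₂ z) z) (lam a b t : ℝ) :
    iteratedDeriv 2 (fun s => exp (-(lam * s)) * g (a * s ^ 2 + b)) t
      = exp (-(lam * t)) * (lam ^ 2 * g (a * t ^ 2 + b) - 4 * lam * a * t * g₁ (a * t ^ 2 + b)
          + 2 * a * g₁ (a * t ^ 2 + b) + 4 * a ^ 2 * t ^ 2 * g₂ (a * t ^ 2 + b)) := by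
  refine iteratedDeriv_two_eq_of_hasDerivAt (hasDerivAt_exp_mul_comp_quadratic hg lam a b)
    (f'' := fun s => exp (-(lam * s)) * (lam ^ 2 * g (a * s ^ 2 + b)
      - 4 * lam * a * s * g₁ (a * s ^ 2 + b) + 2 * a * g₁ (a * s ^ 2 + b)
      + 4 * a ^ 2 * s ^ 2 * g₂ (a * s ^ 2 + b))) (fun s => ?_) t
  have hinner := ((hasDerivAt_comp_quadratic hg a b s).const_mul (-lam)).fun_add
    (((hasDerivAt_id' s).const_mul (2 * a)).fun_mul (hasDerivAt_comp_quadratic hg₁ a b s))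
  exact ((hasDerivAt_exp_neg_mul lam s).fun_mul hinner).congr_deriv (by ring)

end QuadraticProfile

theorem telegraph_eq_zero_of_eventuallyEq {ι : Type*} [Fintype ι] [DecidableEq ι] {g g₁ g₂ : ℝ → ℝ}
    (hg : ∀ z, HasDerivAt g (g₁ z) z) (hg₁ : ∀ z, HasDerivAt g₁ (g₂ z) z)
    (hode : ∀ z, z * g₂ z + (Fintype.card ι + 1) / 2 * g₁ z = g z)
    {lam c q : ℝ} (hq : lam ^ 2 = 4 * q * c ^ 2)
    {u : EuclideanSpace ℝ ι × ℝ → ℝ} {x : EuclideanSpace ℝ ι} {t : ℝ}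
    (hu : u =ᶠ[𝓝 (x, t)] fun p => exp (-(lam * p.2)) * g (q * (c ^ 2 * p.2 ^ 2 - ‖p.1‖ ^ 2))) :
    iteratedDeriv 2 (fun s => u (x, s)) t + 2 * lam * deriv (fun s => u (x, s)) t
      - c ^ 2 * ∑ j, iteratedDeriv 2
          (fun s => u (WithLp.toLp 2 (Function.update x j s), t)) (x j) = 0 := by
  set z₀ := q * (c ^ 2 * t ^ 2 - ‖x‖ ^ 2) with hz₀
  have htime : (fun s => u (x, s)) =ᶠ[𝓝 t]
      fun s => exp (-(lam * s)) * g (q * c ^ 2 * s ^ 2 + -(q * ‖x‖ ^ 2)) := by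
    refine (hu.comp_tendsto ((continuous_const.prodMk continuous_id).tendsto t)).trans
      (.of_eq (funext fun s => ?_))
    simp only [Function.comp, id]
    ring_nf
  have hspace (j : ι) : (fun s => u (WithLp.toLp 2 (Function.update x j s), t)) =ᶠ[𝓝 (x j)]
      fun s => exp (-(lam * t)) * g (-q * s ^ 2 + q * (c ^ 2 * t ^ 2 - ‖x‖ ^ 2 + x j ^ 2)) := by
    have hcurve : Continuous fun s => (WithLp.toLp 2 (Function.update x j s), t) := by fun_prop
    refine (hu.comp_tendsto (hcurve.tendsto' (x j) (x, t) (by simp))).trans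
      (.of_eq (funext fun s => ?_))
    simp only [Function.comp, EuclideanSpace.norm_sq_toLp_update]
    ring_nf
  have hlap (j : ι) :
      iteratedDeriv 2 (fun s => u (WithLp.toLp 2 (Function.update x j s), t)) (x j)
        = exp (-(lam * t)) * (-2 * q * g₁ z₀ + 4 * q ^ 2 * x j ^ 2 * g₂ z₀) := by
    rw [(hspace j).iteratedDeriv_eq, iteratedDeriv_const_mul_field,
      iteratedDeriv_two_comp_quadratic hg hg₁,
      show -q * x j ^ 2 + q * (c ^ 2 * t ^ 2 - ‖x‖ ^ 2 + x j ^ 2) = z₀ by ring]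
    ring
  have hz : q * c ^ 2 * t ^ 2 + -(q * ‖x‖ ^ 2) = z₀ := by ring
  rw [htime.iteratedDeriv_eq, htime.deriv_eq, iteratedDeriv_two_exp_mul_comp_quadratic hg hg₁,
    (hasDerivAt_exp_mul_comp_quadratic hg lam _ _ t).deriv, hz,
    Finset.sum_congr rfl fun j _ => hlap j, ← Finset.mul_sum, Finset.sum_add_distrib,
    ← Finset.mul_sum, ← Finset.sum_mul, ← Finset.mul_sum]
  have hnorm : ∑ i, x i ^ 2 = ‖x‖ ^ 2 := by simp [EuclideanSpace.norm_sq_eq]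
  rw [hnorm, Finset.sum_const, Finset.card_univ, nsmul_eq_mul]
  linear_combination (-exp (-(lam * t)) * g z₀) * hq + 4 * q * c ^ 2 * exp (-(lam * t)) * hode z₀
    - 4 * q * c ^ 2 * exp (-(lam * t)) * g₂ z₀ * hz₀

theorem statement3_general (lam c : ℝ) (hc : 0 < c)
    (u : EuclideanSpace ℝ (Fin 3) × ℝ → ℝ)
    (hu : ∀ (x : EuclideanSpace ℝ (Fin 3)) (t : ℝ), u (x, t) =
      Real.exp (-(lam * t)) / π * (lam / (2 * c)) ^ 2 *
        besselI1 (lam / c * Real.sqrt (c ^ 2 * t ^ 2 - ‖x‖ ^ 2)) /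
        Real.sqrt (c ^ 2 * t ^ 2 - ‖x‖ ^ 2)) :
    ∀ (x : EuclideanSpace ℝ (Fin 3)) (t : ℝ), 0 < t → ‖x‖ < c * t →
      iteratedDeriv 2 (fun s => u (x, s)) t
        + 2 * lam * deriv (fun s => u (x, s)) t
        - c ^ 2 * ∑ j : Fin 3,
            iteratedDeriv 2 (fun s => u (WithLp.toLp 2 (Function.update x j s), t)) (x j) = 0 := by
  intro x t _ hxt
  set b := lam / (2 * c)
  set K := b ^ 2 * b / π
  have hcone : {p : EuclideanSpace ℝ (Fin 3) × ℝ | ‖p.1‖ ^ 2 < c ^ 2 * p.2 ^ 2} ∈ 𝓝 (x, t) :=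
    (isOpen_lt (by fun_prop) (by fun_prop)).mem_nhds <| by
      simp only [Set.mem_ofPred_eq]; nlinarith [norm_nonneg x]
  refine telegraph_eq_zero_of_eventuallyEq (g := fun z => K * powSeries besselCoeff z)
    (fun z => (hasDerivAt_powSeries abs_besselCoeff_le z).const_mul K)
    (fun z => (hasDerivAt_powSeries (abs_derivCoeff_le abs_besselCoeff_le) z).const_mul K)
    (fun z => ?_) (q := b ^ 2) (by simp only [b]; field_simp; ring) ?_
  · rw [Fintype.card_fin]
    linear_combination K * powSeries_besselCoeff_ode z
  · filter_upwards [hcone] with ⟨y, s⟩ (hys : ‖y‖ ^ 2 < c ^ 2 * s ^ 2)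
    rw [hu, mul_div_assoc, besselI1_mul_sqrt_div_sqrt _ (sub_pos.mpr hys),
      show lam / c / 2 = b by ring]
    ring

/-- the density
`u(x,t) = (e^{-λt}/π) (λ/(2c))² I₁((λ/c)√(c²t² - ‖x‖²)) / √(c²t² - ‖x‖²)`
of the three-dimensional random flight with changes of direction at even-valued
Poisson events satisfies the three-dimensional telegraph equation
`∂²u/∂t² + 2λ ∂u/∂t - c² Δu = 0` on the open cone `{(x,t) : ‖x‖ < ct, t > 0}`. -/
theorem statement3 (lam c : ℝ) (hlam : 0 < lam) (hc : 0 < c)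
    (u : EuclideanSpace ℝ (Fin 3) × ℝ → ℝ)
    (hu : ∀ (x : EuclideanSpace ℝ (Fin 3)) (t : ℝ), u (x, t) =
      Real.exp (-(lam * t)) / π * (lam / (2 * c)) ^ 2 *
        besselI1 (lam / c * Real.sqrt (c ^ 2 * t ^ 2 - ‖x‖ ^ 2)) /
        Real.sqrt (c ^ 2 * t ^ 2 - ‖x‖ ^ 2)) :
    ∀ (x : EuclideanSpace ℝ (Fin 3)) (t : ℝ), 0 < t → ‖x‖ < c * t →
      iteratedDeriv 2 (fun s => u (x, s)) t
        + 2 * lam * deriv (fun s => u (x, s)) t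
        - c ^ 2 * ∑ j : Fin 3,
            iteratedDeriv 2 (fun s => u (WithLp.toLp 2 (Function.update x j s), t)) (x j) = 0 :=
  statement3_general lam c hc u hu
end

section
/- Let d ≥ 3 be an integer and λ, c > 0. Define f : (0,∞) → ℝ by f(w) = Σ_{k=1}^∞ (λ/(2c))^{k(d−2)} w^{k(d−2)−2} / ( Γ(k(d/2 − 1)) · Γ((d−1)/2 + (d/2 − 1)k) ). Then f satisfies the non-homogeneous iterated hyper-Bessel ordinary differential equation T^{(d−2)} f (w) = (λ/c)^{2(d−2)} f(w) + (2λ/c)^{d−2} · w^{−d} / (√π · Γ(1 − d/2)) for all w > 0, where (T g)(w) = g''(w) + (d/w) g'(w), T^{(r)} denotes the r-fold iterate of T, and 1/Γ(1 − d/2) is interpreted as 0 when 1 − d/2 is a nonpositive integer (so the inhomogeneous term vanishes for all even d ≥ 4). -/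
/-!
Write `f(w) = ∑ a_k w^{ρ_k}` with `ρ_k = (k+1)(d-2) - 2`. Since `T (w^ρ) = ρ(ρ+d-1) w^{ρ-2}`,
`T^{d-2}` acts termwise (the reciprocal Gamma factors decay superexponentially, which justifies
differentiating under the sum) and multiplies the `k`-th term by
`∏_{i<d-2} (ρ_k-2i)(ρ_k-2i+d-1)`. This factor is `4^{d-2}` times two rising products of length
`d-2`, which cancel against the Gamma functions through `1/Γ(x) = (x)_n / Γ(x+n)`: the `k`-th
coefficient becomes that of index `k-2`. Hence the new term `k+2` is `(λ/c)^{2(d-2)}` times the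
old term `k`, the new term `1` contains `1/Γ(0) = 0`, and the new term `0` is the inhomogeneous
term `(2λ/c)^{d-2} w^{-d} / (Γ(1/2) Γ(1-d/2))`.
-/
open Real

/-- The hyper-Bessel-type operator `T g (w) = g''(w) + (d/w) g'(w)`. -/
noncomputable def hyperBesselT (d : ℕ) (g : ℝ → ℝ) : ℝ → ℝ :=
  fun w => deriv (deriv g) w + ((d : ℝ) / w) * deriv g w

open Filter Finset Topology

/-- The weight `(|ρ k| + 1) ^ N` makes the condition stable under termwise differentiation, so
`∑ b k * x ^ ρ k` can be differentiated termwise any number of times on `(0, ∞)`. -/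
def RpowSeriesSummable (b ρ : ℕ → ℝ) : Prop :=
  ∀ (N : ℕ) (t : ℝ), 0 < t → Summable fun k => |b k| * (|ρ k| + 1) ^ N * t ^ ρ k

theorem rpow_le_rpow_add_rpow_of_mem_Icc {a c y : ℝ} (ha : 0 < a) (hy : y ∈ Set.Icc a c)
    (e : ℝ) : y ^ e ≤ a ^ e + c ^ e := by
  have hc : 0 < c := ha.trans_le (hy.1.trans hy.2)
  rcases le_total 0 e with he | he
  · linarith [rpow_le_rpow (ha.le.trans hy.1) hy.2 he, rpow_nonneg ha.le e]
  · linarith [rpow_le_rpow_of_nonpos ha hy.1 he, rpow_nonneg hc.le e]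

theorem abs_mul_add_sub_one_le (ρ : ℝ) (d : ℕ) :
    |ρ * (ρ + d - 1)| ≤ (d + 1) * (|ρ| + 1) ^ 2 := by
  have hd : (0 : ℝ) ≤ d := d.cast_nonneg
  have h : |ρ + d - 1| ≤ |ρ| + d + 1 := by
    rw [abs_le]; constructor <;> linarith [le_abs_self ρ, neg_abs_le ρ]
  rw [abs_mul]
  calc |ρ| * |ρ + d - 1| ≤ (|ρ| + 1) * ((d + 1) * (|ρ| + 1)) :=
        mul_le_mul (by linarith) (h.trans (by nlinarith [abs_nonneg ρ])) (abs_nonneg _)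
          (by positivity)
    _ = (d + 1) * (|ρ| + 1) ^ 2 := by ring

theorem hyperBesselT_congr {d : ℕ} {f g : ℝ → ℝ} {x : ℝ} (h : f =ᶠ[𝓝 x] g) :
    hyperBesselT d f x = hyperBesselT d g x := by
  simp only [hyperBesselT, h.deriv_eq, h.deriv.deriv_eq]

/-- `T^[j] (x ^ ρ) = hyperBesselFactor d ρ j * x ^ (ρ - 2 * j)`. -/
def hyperBesselFactor (d : ℕ) (ρ : ℝ) (j : ℕ) : ℝ :=
  ∏ i ∈ range j, (ρ - 2 * i) * (ρ - 2 * i + d - 1)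

theorem hyperBesselFactor_succ (d : ℕ) (ρ : ℝ) (j : ℕ) :
    hyperBesselFactor d ρ (j + 1) =
      (ρ - 2 * j) * (ρ - 2 * j + d - 1) * hyperBesselFactor d ρ j := by
  rw [hyperBesselFactor, prod_range_succ, mul_comm]; rfl

namespace RpowSeriesSummable

variable {b ρ : ℕ → ℝ}

theorem summable (h : RpowSeriesSummable b ρ) {x : ℝ} (hx : 0 < x) :
    Summable fun k => b k * x ^ ρ k :=
  (h 0 x hx).of_norm_bounded fun k => by
    simp [abs_of_nonneg (rpow_nonneg hx.le _)]

theorem mul_sub (h : RpowSeriesSummable b ρ) {a : ℕ → ℝ} {C : ℝ} {m : ℕ}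
    (ha : ∀ k, |a k| ≤ C * (|ρ k| + 1) ^ m) (s : ℝ) :
    RpowSeriesSummable (fun k => a k * b k) (fun k => ρ k - s) := by
  intro N t ht
  refine .of_nonneg_of_le (fun k => by positivity) (fun k => ?_)
    ((h (m + N) t ht).mul_left (C * (|s| + 1) ^ N * (t ^ s)⁻¹))
  have hρ : |ρ k - s| + 1 ≤ (|s| + 1) * (|ρ k| + 1) := by
    nlinarith [abs_sub (ρ k) s, abs_nonneg (ρ k), abs_nonneg s]
  calc |a k * b k| * (|ρ k - s| + 1) ^ N * t ^ (ρ k - s)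
      ≤ C * (|ρ k| + 1) ^ m * |b k| * ((|s| + 1) * (|ρ k| + 1)) ^ N *
          (t ^ ρ k * (t ^ s)⁻¹) := by
        rw [abs_mul, rpow_sub ht, div_eq_mul_inv]
        gcongr
        exacts [mul_nonneg ((abs_nonneg _).trans (ha k)) (abs_nonneg _), ha k]
    _ = _ := by rw [mul_pow, pow_add]; ring

theorem deriv_series (h : RpowSeriesSummable b ρ) :
    RpowSeriesSummable (fun k => ρ k * b k) (fun k => ρ k - 1) :=
  h.mul_sub (a := ρ) (C := 1) (m := 1) (fun k => by rw [one_mul, pow_one]; linarith) 1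

theorem hasDerivAt_tsum (h : RpowSeriesSummable b ρ) {w : ℝ} (hw : 0 < w) :
    HasDerivAt (fun x => ∑' k, b k * x ^ ρ k) (∑' k, ρ k * b k * w ^ (ρ k - 1)) w := by
  have hl : 0 < w / 2 := by linarith
  have hbound :
      Summable fun k => |ρ k * b k| * ((w / 2) ^ (ρ k - 1) + (2 * w) ^ (ρ k - 1)) := by
    refine ((h.deriv_series 0 _ hl).add (h.deriv_series 0 (2 * w) (by linarith))).congr
      fun k => ?_
    simp only [pow_zero, mul_one, mul_add]
  have hw' : w ∈ Set.Ioo (w / 2) (2 * w) := ⟨by linarith, by linarith⟩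
  refine hasDerivAt_tsum_of_isPreconnected (g := fun k x => b k * x ^ ρ k)
    (g' := fun k y => ρ k * b k * y ^ (ρ k - 1)) hbound isOpen_Ioo
    (convex_Ioo _ _).isPreconnected (fun k y hy => ?_) (fun k y hy => ?_) hw' (h.summable hw) hw'
  · exact ((hasDerivAt_rpow_const (Or.inl (hl.trans hy.1).ne')).const_mul (b k)).congr_deriv
      (by ring)
  · rw [norm_mul, Real.norm_eq_abs, Real.norm_of_nonneg (rpow_nonneg (hl.trans hy.1).le _)]
    gcongr
    exact rpow_le_rpow_add_rpow_of_mem_Icc hl (Set.Ioo_subset_Icc_self hy) _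

theorem hyperBesselT_series (h : RpowSeriesSummable b ρ) (d : ℕ) :
    RpowSeriesSummable (fun k => ρ k * (ρ k + d - 1) * b k) (fun k => ρ k - 2) :=
  h.mul_sub (fun k => abs_mul_add_sub_one_le (ρ k) d) 2

theorem hyperBesselT_tsum (h : RpowSeriesSummable b ρ) (d : ℕ) {x : ℝ} (hx : 0 < x) :
    hyperBesselT d (fun x => ∑' k, b k * x ^ ρ k) x =
      ∑' k, ρ k * (ρ k + d - 1) * b k * x ^ (ρ k - 2) := by
  have hderiv : deriv (fun x => ∑' k, b k * x ^ ρ k) =ᶠ[𝓝 x]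
      fun y => ∑' k, ρ k * b k * y ^ (ρ k - 1) :=
    eventually_of_mem (Ioi_mem_nhds hx) fun y hy => (h.hasDerivAt_tsum hy).deriv
  rw [hyperBesselT, hderiv.deriv_eq, hderiv.eq_of_nhds,
    (h.deriv_series.hasDerivAt_tsum hx).deriv, ← tsum_mul_left,
    ← (h.deriv_series.deriv_series.summable hx).tsum_add ((h.deriv_series.summable hx).mul_left _)]
  refine tsum_congr fun k => ?_
  rw [sub_sub, one_add_one_eq_two, show ρ k - 1 = ρ k - 2 + 1 by ring, rpow_add hx, rpow_one]
  field_simp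
  ring

theorem iterate_hyperBesselT_tsum (h : RpowSeriesSummable b ρ) (d j : ℕ) :
    RpowSeriesSummable (fun k => hyperBesselFactor d (ρ k) j * b k) (fun k => ρ k - 2 * j) ∧
      ∀ x, 0 < x → (hyperBesselT d)^[j] (fun x => ∑' k, b k * x ^ ρ k) x =
        ∑' k, hyperBesselFactor d (ρ k) j * b k * x ^ (ρ k - 2 * j) := by
  induction j with
  | zero => simpa [hyperBesselFactor] using h
  | succ j ih =>
    obtain ⟨hj, hiter⟩ := ih
    have hshift : ∀ k, ρ k - 2 * j - 2 = ρ k - 2 * ↑(j + 1) := fun k => by push_cast; ring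
    constructor
    · simpa only [hshift, hyperBesselFactor_succ, mul_assoc] using hj.hyperBesselT_series d
    · intro x hx
      rw [Function.iterate_succ_apply',
        hyperBesselT_congr (eventually_of_mem (Ioi_mem_nhds hx) hiter), hj.hyperBesselT_tsum d hx]
      simp only [hshift, hyperBesselFactor_succ, mul_assoc]

end RpowSeriesSummable

namespace Real

/-- Also true at the poles, where Mathlib's `Gamma` is `0`. -/
theorem inv_Gamma_eq_mul_inv_Gamma_add_one (x : ℝ) :
    (Gamma x)⁻¹ = x * (Gamma (x + 1))⁻¹ := by
  rcases ne_or_eq x 0 with hx | rfl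
  · rw [Gamma_add_one hx, mul_inv, mul_inv_cancel_left₀ hx]
  · rw [zero_add, Gamma_zero, inv_zero, zero_mul]

theorem inv_Gamma_eq_prod_div_Gamma_add_nat (x : ℝ) (n : ℕ) :
    (Gamma x)⁻¹ = (∏ i ∈ range n, (x + i)) / Gamma (x + n) := by
  induction n with
  | zero => simp
  | succ n ih =>
    rw [ih, div_eq_mul_inv, inv_Gamma_eq_mul_inv_Gamma_add_one (x + n), prod_range_succ,
      Nat.cast_succ, ← add_assoc, div_eq_mul_inv]
    ring

theorem factorial_le_Gamma {y : ℝ} (n : ℕ) (hy : 2 ≤ y) (hn : (n : ℝ) + 1 ≤ y) :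
    (n.factorial : ℝ) ≤ Gamma y := by
  have hmono := Gamma_strictMonoOn_Ici.monotoneOn
  rcases n.eq_zero_or_pos with rfl | hpos
  · simpa [Gamma_two] using hmono (Set.mem_Ici.2 le_rfl) (Set.mem_Ici.2 hy) hy
  · rw [← Gamma_nat_eq_factorial]
    have : (1 : ℝ) ≤ n := by exact_mod_cast hpos
    exact hmono (Set.mem_Ici.2 (by linarith)) (Set.mem_Ici.2 hy) hn

theorem pow_le_exp_sq_mul_Gamma {B y : ℝ} (n : ℕ) (hy : 2 ≤ y) (hn : (n : ℝ) + 1 ≤ y) :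
    B ^ (2 * n) ≤ exp (B ^ 2) * Gamma y := by
  have := pow_div_factorial_le_exp (B ^ 2) (sq_nonneg B) n
  rw [div_le_iff₀ (by positivity), ← pow_mul] at this
  exact this.trans (mul_le_mul_of_nonneg_left (factorial_le_Gamma n hy hn) (exp_pos _).le)

end Real

theorem hyperBesselFactor_eq (d : ℕ) (ρ : ℝ) (n : ℕ) :
    hyperBesselFactor d ρ n = 4 ^ n * (∏ i ∈ range n, ((ρ + 2) / 2 - n + i)) *
      ∏ i ∈ range n, ((ρ + d + 1) / 2 - n + i) := by
  rw [hyperBesselFactor, ← prod_range_reflect (fun i : ℕ => (ρ + 2) / 2 - n + i),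
    ← prod_range_reflect (fun i : ℕ => (ρ + d + 1) / 2 - n + i), mul_assoc, ← prod_mul_distrib,
    show (4 : ℝ) ^ n = ∏ _i ∈ range n, (4 : ℝ) by simp, ← prod_mul_distrib]
  refine prod_congr rfl fun i hi => ?_
  rw [Nat.cast_sub (by simp at hi; omega), Nat.cast_sub (by simp at hi; omega)]
  push_cast
  ring

noncomputable def radialCoeff (X : ℝ) (d k : ℕ) : ℝ :=
  X ^ ((k + 1) * (d - 2)) /
    (Gamma (((k : ℝ) + 1) * ((d : ℝ) / 2 - 1)) *
      Gamma (((d : ℝ) - 1) / 2 + ((d : ℝ) / 2 - 1) * ((k : ℝ) + 1)))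

def radialExponent (d k : ℕ) : ℝ := ((k : ℝ) + 1) * ((d : ℝ) - 2) - 2

theorem abs_radialCoeff_mul_pow_le (X : ℝ) {d k : ℕ} (hd : 3 ≤ d) (hk : 3 ≤ k) {B : ℝ}
    (hB : 1 ≤ B) : |radialCoeff X d k| * B ^ k ≤ exp (B ^ 2) * |X| ^ ((k + 1) * (d - 2)) := by
  have hdR : (3 : ℝ) ≤ d := by exact_mod_cast hd
  have hkR : (3 : ℝ) ≤ k := by exact_mod_cast hk
  set y := ((d : ℝ) - 1) / 2 + ((d : ℝ) / 2 - 1) * ((k : ℝ) + 1) with hy_def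
  have hy_ge : ((k : ℝ) + 3) / 2 ≤ y := by rw [hy_def]; nlinarith
  have hz : 1 ≤ Gamma (((k : ℝ) + 1) * ((d : ℝ) / 2 - 1)) := by
    simpa [Gamma_two] using Gamma_strictMonoOn_Ici.monotoneOn (Set.mem_Ici.2 le_rfl)
      (Set.mem_Ici.2 (by nlinarith)) (show (2 : ℝ) ≤ _ by nlinarith)
  have hy : B ^ k ≤ exp (B ^ 2) * Gamma y := by
    refine (pow_le_pow_right₀ hB (show k ≤ 2 * ((k + 1) / 2) by omega)).trans
      (pow_le_exp_sq_mul_Gamma _ (by linarith) ?_)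
    have := Nat.cast_div_le (α := ℝ) (m := k + 1) (n := 2)
    push_cast at this
    linarith
  have hΓy : 0 < Gamma y := Gamma_pos_of_pos (by linarith)
  rw [radialCoeff, abs_div, abs_pow, abs_of_pos (mul_pos (by linarith) hΓy),
    div_mul_eq_mul_div, div_le_iff₀ (mul_pos (by linarith) hΓy)]
  calc |X| ^ ((k + 1) * (d - 2)) * B ^ k
      ≤ |X| ^ ((k + 1) * (d - 2)) * (exp (B ^ 2) * Gamma y) := by gcongr
    _ ≤ |X| ^ ((k + 1) * (d - 2)) * (exp (B ^ 2) * Gamma y) *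
          Gamma (((k : ℝ) + 1) * ((d : ℝ) / 2 - 1)) := le_mul_of_one_le_right (by positivity) hz
    _ = _ := by ring

theorem rpowSeriesSummable_radial (X : ℝ) {d : ℕ} (hd : 3 ≤ d) :
    RpowSeriesSummable (radialCoeff X d) (radialExponent d) := by
  intro N t ht
  have hdR : (3 : ℝ) ≤ d := by exact_mod_cast hd
  set q := (|X| * t) ^ (d - 2)
  set B := 2 * q + 1
  have hq : 0 ≤ q := by positivity
  have hqB : ‖q / B‖ < 1 := by
    rw [Real.norm_of_nonneg (by positivity), div_lt_one (by positivity)]; linarith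
  refine .of_norm_bounded_eventually_nat
    ((summable_pow_mul_geometric_of_norm_lt_one N hqB).mul_left
      ((2 * d) ^ N * exp (B ^ 2) * q / t ^ 2)) ?_
  filter_upwards [eventually_ge_atTop 3] with k hk
  have hkR : (3 : ℝ) ≤ k := by exact_mod_cast hk
  have hρ : |radialExponent d k| + 1 ≤ 2 * d * k := by
    rw [radialExponent, abs_of_nonneg (by nlinarith)]; nlinarith
  have htρ : t ^ radialExponent d k = t ^ ((k + 1) * (d - 2)) / t ^ 2 := by
    have e : radialExponent d k = (((k + 1) * (d - 2) : ℕ) : ℝ) - 2 := by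
      rw [radialExponent]; push_cast [Nat.cast_sub (by omega : 2 ≤ d)]; ring
    rw [e, rpow_sub ht, rpow_natCast, rpow_two]
  have hpow : |X| ^ ((k + 1) * (d - 2)) * t ^ ((k + 1) * (d - 2)) = q * q ^ k := by
    rw [← mul_pow, mul_comm (k + 1), pow_mul, pow_succ']
  have hcoeff := abs_radialCoeff_mul_pow_le X hd hk (show 1 ≤ B by linarith)
  have hBk : 0 < B ^ k := by positivity
  rw [Real.norm_of_nonneg (by positivity), htρ]
  calc |radialCoeff X d k| * (|radialExponent d k| + 1) ^ N * (t ^ ((k + 1) * (d - 2)) / t ^ 2)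
      = |radialCoeff X d k| * B ^ k * (|radialExponent d k| + 1) ^ N *
          t ^ ((k + 1) * (d - 2)) / (t ^ 2 * B ^ k) := by field_simp
    _ ≤ exp (B ^ 2) * |X| ^ ((k + 1) * (d - 2)) * (2 * d * k) ^ N *
          t ^ ((k + 1) * (d - 2)) / (t ^ 2 * B ^ k) := by gcongr
    _ = exp (B ^ 2) * (2 * d * k) ^ N * (q * q ^ k) / (t ^ 2 * B ^ k) := by rw [← hpow]; ring
    _ = (2 * d) ^ N * exp (B ^ 2) * q / t ^ 2 * ((k : ℝ) ^ N * (q / B) ^ k) := by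
      rw [div_pow, mul_pow]; field_simp

theorem hyperBesselFactor_mul_radialCoeff (X : ℝ) {d : ℕ} (hd : 2 ≤ d) (k : ℕ) :
    hyperBesselFactor d (radialExponent d k) (d - 2) * radialCoeff X d k =
      4 ^ (d - 2) * X ^ ((k + 1) * (d - 2)) /
        (Gamma (((k : ℝ) - 1) * ((d : ℝ) / 2 - 1)) *
          Gamma (((d : ℝ) - 1) / 2 + ((d : ℝ) / 2 - 1) * ((k : ℝ) - 1))) := by
  have hn : ((d - 2 : ℕ) : ℝ) = d - 2 := by rw [Nat.cast_sub hd]; push_cast; ring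
  rw [div_eq_mul_inv _ (_ * _), mul_inv,
    inv_Gamma_eq_prod_div_Gamma_add_nat (((k : ℝ) - 1) * ((d : ℝ) / 2 - 1)) (d - 2),
    inv_Gamma_eq_prod_div_Gamma_add_nat (((d : ℝ) - 1) / 2 + ((d : ℝ) / 2 - 1) * ((k : ℝ) - 1))
      (d - 2), hyperBesselFactor_eq, radialCoeff, hn]
  have hz : ((k : ℝ) - 1) * ((d : ℝ) / 2 - 1) + (d - 2) = ((k : ℝ) + 1) * ((d : ℝ) / 2 - 1) := by
    ring
  have hy : ((d : ℝ) - 1) / 2 + ((d : ℝ) / 2 - 1) * ((k : ℝ) - 1) + (d - 2) =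
      ((d : ℝ) - 1) / 2 + ((d : ℝ) / 2 - 1) * ((k : ℝ) + 1) := by
    ring
  have hz' : ∀ i : ℕ, (radialExponent d k + 2) / 2 - (d - 2) + i =
      ((k : ℝ) - 1) * ((d : ℝ) / 2 - 1) + i := fun i => by rw [radialExponent]; ring
  have hy' : ∀ i : ℕ, (radialExponent d k + d + 1) / 2 - (d - 2) + i =
      ((d : ℝ) - 1) / 2 + ((d : ℝ) / 2 - 1) * ((k : ℝ) - 1) + i := fun i => by
    rw [radialExponent]; ring
  simp only [hz, hy, hz', hy']
  ring

theorem hyperBesselFactor_mul_radialCoeff_zero (X : ℝ) {d : ℕ} (hd : 2 ≤ d) :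
    hyperBesselFactor d (radialExponent d 0) (d - 2) * radialCoeff X d 0 =
      (4 * X) ^ (d - 2) / (√π * Gamma (1 - (d : ℝ) / 2)) := by
  rw [hyperBesselFactor_mul_radialCoeff X hd, Nat.cast_zero, zero_add, one_mul, mul_pow,
    show ((0 : ℝ) - 1) * ((d : ℝ) / 2 - 1) = 1 - d / 2 by ring,
    show ((d : ℝ) - 1) / 2 + ((d : ℝ) / 2 - 1) * (0 - 1) = 1 / 2 by ring, Gamma_one_half_eq,
    mul_comm √π]

theorem hyperBesselFactor_mul_radialCoeff_one (X : ℝ) {d : ℕ} (hd : 2 ≤ d) :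
    hyperBesselFactor d (radialExponent d 1) (d - 2) * radialCoeff X d 1 = 0 := by
  rw [hyperBesselFactor_mul_radialCoeff X hd, Nat.cast_one, sub_self, zero_mul, Gamma_zero,
    zero_mul, div_zero]

theorem hyperBesselFactor_mul_radialCoeff_add_two (X : ℝ) {d : ℕ} (hd : 2 ≤ d) (k : ℕ) :
    hyperBesselFactor d (radialExponent d (k + 2)) (d - 2) * radialCoeff X d (k + 2) =
      (4 * X ^ 2) ^ (d - 2) * radialCoeff X d k := by
  rw [hyperBesselFactor_mul_radialCoeff X hd, radialCoeff, Nat.cast_add, Nat.cast_two,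
    add_sub_assoc, show (2 : ℝ) - 1 = 1 by norm_num]
  ring

theorem radialExponent_sub_zero {d : ℕ} (hd : 2 ≤ d) :
    radialExponent d 0 - 2 * ((d - 2 : ℕ) : ℝ) = -d := by
  rw [radialExponent, Nat.cast_sub hd]; push_cast; ring

theorem radialExponent_add_two_sub {d : ℕ} (hd : 2 ≤ d) (k : ℕ) :
    radialExponent d (k + 2) - 2 * ((d - 2 : ℕ) : ℝ) = radialExponent d k := by
  rw [radialExponent, radialExponent, Nat.cast_sub hd]; push_cast; ring

theorem statement9_general (d : ℕ) (hd : 3 ≤ d) (lam c : ℝ)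
    (f : ℝ → ℝ)
    (hf : ∀ w : ℝ, f w = ∑' k : ℕ,
      (lam / (2 * c)) ^ ((k + 1) * (d - 2)) *
        w ^ ((((k : ℝ) + 1) * ((d : ℝ) - 2)) - 2) /
        (Real.Gamma (((k : ℝ) + 1) * ((d : ℝ) / 2 - 1)) *
          Real.Gamma (((d : ℝ) - 1) / 2 + ((d : ℝ) / 2 - 1) * ((k : ℝ) + 1)))) :
    ∀ w : ℝ, 0 < w →
      (hyperBesselT d)^[d - 2] f w =
        (lam / c) ^ (2 * (d - 2)) * f w +
          (2 * lam / c) ^ (d - 2) * w ^ (-(d : ℝ)) /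
            (Real.sqrt π * Real.Gamma (1 - (d : ℝ) / 2)) := by
  intro w hw
  have hd2 : 2 ≤ d := by omega
  set X := lam / (2 * c)
  have hf_series : f = fun x => ∑' k, radialCoeff X d k * x ^ radialExponent d k :=
    funext fun x => (hf x).trans (tsum_congr fun k => by rw [radialCoeff, radialExponent]; ring)
  obtain ⟨hsum, hiter⟩ :=
    (rpowSeriesSummable_radial X hd).iterate_hyperBesselT_tsum d (d - 2)
  rw [hf_series, hiter w hw, (hsum.summable hw).tsum_eq_zero_add,
    ((summable_nat_add_iff 1).2 (hsum.summable hw)).tsum_eq_zero_add, ← tsum_mul_left]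
  simp only [hyperBesselFactor_mul_radialCoeff_zero X hd2,
    hyperBesselFactor_mul_radialCoeff_one X hd2, hyperBesselFactor_mul_radialCoeff_add_two X hd2,
    radialExponent_sub_zero hd2, radialExponent_add_two_sub hd2, zero_mul, zero_add]
  rw [show 4 * X = 2 * lam / c by ring, show 4 * X ^ 2 = (lam / c) ^ 2 by ring, ← pow_mul,
    add_comm, div_mul_eq_mul_div]
  exact congrArg₂ _ (tsum_congr fun k => by ring) rfl

/-- for `d ≥ 3`, `λ, c > 0`, the radial density
`f(w) = Σ_{k=1}^∞ (λ/(2c))^{k(d-2)} w^{k(d-2)-2} / (Γ(k(d/2-1)) Γ((d-1)/2 + (d/2-1)k))`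
satisfies the non-homogeneous iterated hyper-Bessel ODE
`T^(d-2) f (w) = (λ/c)^{2(d-2)} f(w) + (2λ/c)^{d-2} w^{-d} / (√π Γ(1 - d/2))`
for all `w > 0`, where `T g = g'' + (d/w) g'`.  (Mathlib's `Real.Gamma` vanishes
at nonpositive integers, so the inhomogeneous term vanishes for even `d ≥ 4`.) -/
theorem statement9 (d : ℕ) (hd : 3 ≤ d) (lam c : ℝ) (hlam : 0 < lam) (hc : 0 < c)
    (f : ℝ → ℝ)
    (hf : ∀ w : ℝ, f w = ∑' k : ℕ,
      (lam / (2 * c)) ^ ((k + 1) * (d - 2)) *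
        w ^ ((((k : ℝ) + 1) * ((d : ℝ) - 2)) - 2) /
        (Real.Gamma (((k : ℝ) + 1) * ((d : ℝ) / 2 - 1)) *
          Real.Gamma (((d : ℝ) - 1) / 2 + ((d : ℝ) / 2 - 1) * ((k : ℝ) + 1)))) :
    ∀ w : ℝ, 0 < w →
      (hyperBesselT d)^[d - 2] f w =
        (lam / c) ^ (2 * (d - 2)) * f w +
          (2 * lam / c) ^ (d - 2) * w ^ (-(d : ℝ)) /
            (Real.sqrt π * Real.Gamma (1 - (d : ℝ) / 2)) :=
  statement9_general d hd lam c f hf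
end

section
/- Let λ, c > 0, t > 0, and let (x₁, x₂) ∈ ℝ² satisfy x₁² + x₂² < c²t². Set a = √(c²t² − x₁² − x₂²). Then ∫_{−a}^{a} (λ/(2c))² · (1/(π sinh(λt))) · I₁((λ/c)√(c²t² − x₁² − x₂² − x₃²)) / √(c²t² − x₁² − x₂² − x₃²) dx₃ = (λ/(2πc)) · (1/sinh(λt)) · ( cosh((λ/c) a) − 1 ) / a. -/
open Real

open Nat MeasureTheory Set

theorem besselI1_mul_div (b : ℝ) {s : ℝ} (hs : s ≠ 0) :
    besselI1 (b * s) / s = ∑' k : ℕ, (b / 2) ^ (2 * k + 1) / (k ! * (k + 1)!) * (s ^ 2) ^ k := by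
  rw [besselI1, ← tsum_div_const]
  refine tsum_congr fun k => ?_
  rw [← pow_mul, mul_div_right_comm, mul_pow, pow_succ s]
  field_simp

theorem integral_sq_sub_sq_pow_succ (a : ℝ) (k : ℕ) :
    (2 * k + 3) * ∫ x in -a..a, (a ^ 2 - x ^ 2) ^ (k + 1)
      = 2 * (k + 1) * a ^ 2 * ∫ x in -a..a, (a ^ 2 - x ^ 2) ^ k := by
  have hderiv (x : ℝ) : HasDerivAt (fun x : ℝ => x * (a ^ 2 - x ^ 2) ^ (k + 1))
      ((2 * k + 3) * (a ^ 2 - x ^ 2) ^ (k + 1) - 2 * (k + 1) * a ^ 2 * (a ^ 2 - x ^ 2) ^ k) x := by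
    refine ((hasDerivAt_id' x).fun_mul
      (((hasDerivAt_pow 2 x).const_sub (a ^ 2)).fun_pow (k + 1))).congr_deriv ?_
    push_cast
    ring
  have hint (m : ℕ) : IntervalIntegrable (fun x : ℝ => (a ^ 2 - x ^ 2) ^ m) volume (-a) a :=
    (by fun_prop : Continuous fun x : ℝ => (a ^ 2 - x ^ 2) ^ m).intervalIntegrable _ _
  have hzero := intervalIntegral.integral_eq_sub_of_hasDerivAt (fun x _ => hderiv x)
    (((hint _).const_mul _).sub ((hint _).const_mul _))
  rw [intervalIntegral.integral_sub ((hint _).const_mul _) ((hint _).const_mul _),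
    intervalIntegral.integral_const_mul, intervalIntegral.integral_const_mul] at hzero
  simp only [sub_self, ne_eq, Nat.add_eq_zero_iff, one_ne_zero, and_false, not_false_eq_true,
    zero_pow, mul_zero, neg_sq] at hzero
  linarith

theorem integral_sq_sub_sq_pow (a : ℝ) (k : ℕ) :
    ∫ x in -a..a, (a ^ 2 - x ^ 2) ^ k
      = 2 ^ (2 * k + 1) * (k ! : ℝ) ^ 2 / (2 * k + 1)! * a ^ (2 * k + 1) := by
  induction k with
  | zero => simp [two_mul]
  | succ k ih =>
    refine mul_left_cancel₀ (by positivity : (2 * k + 3 : ℝ) ≠ 0) ?_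
    have hfac : ((2 * (k + 1) + 1)! : ℝ) = (2 * k + 3) * (2 * k + 2) * (2 * k + 1)! := by
      rw [show 2 * (k + 1) + 1 = 2 * k + 1 + 1 + 1 by ring, factorial_succ, factorial_succ]
      push_cast
      ring
    rw [integral_sq_sub_sq_pow_succ, ih, hfac, factorial_succ k]
    push_cast
    field_simp
    ring

theorem integral_besselI1_series_term (b a : ℝ) (k : ℕ) :
    ∫ x in -a..a, (b / 2) ^ (2 * k + 1) / (k ! * (k + 1)!) * (a ^ 2 - x ^ 2) ^ k
      = 2 * (b * a) ^ (2 * k + 1) / (2 * k + 2)! := by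
  rw [intervalIntegral.integral_const_mul, integral_sq_sub_sq_pow, div_pow, factorial_succ k,
    factorial_succ (2 * k + 1)]
  push_cast
  field_simp
  ring

theorem hasSum_cosh_sub_one_div {y : ℝ} (hy : y ≠ 0) :
    HasSum (fun k : ℕ => 2 * y ^ (2 * k + 1) / (2 * k + 2)!) (2 * (cosh y - 1) / y) := by
  have h := (hasSum_nat_add_iff' 1).mpr (Real.hasSum_cosh y)
  simp only [Finset.range_one, Finset.sum_singleton, mul_zero, pow_zero, factorial_zero,
    cast_one, div_one, mul_add_one] at h
  rw [mul_div_right_comm]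
  refine (h.mul_left (2 / y)).congr_fun fun k => ?_
  field_simp
  ring

theorem integral_besselI1_sqrt_div_sqrt {a : ℝ} (ha : 0 < a) {b : ℝ} (hb : b ≠ 0) :
    ∫ x in -a..a, besselI1 (b * √(a ^ 2 - x ^ 2)) / √(a ^ 2 - x ^ 2)
      = 2 * (cosh (b * a) - 1) / (b * a) := by
  set F : ℝ → ℕ → ℝ → ℝ := fun b k x ↦
    (b / 2) ^ (2 * k + 1) / (k ! * (k + 1)!) * (a ^ 2 - x ^ 2) ^ k
  have hpos {x : ℝ} (hx : x ∈ Ioo (-a) a) : 0 < a ^ 2 - x ^ 2 := sub_pos.2 (sq_lt_sq' hx.1 hx.2)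
  have hF_int (b : ℝ) (k : ℕ) :
      ∫ x in Ioo (-a) a, F b k x = 2 * (b * a) ^ (2 * k + 1) / (2 * k + 2)! := by
    rw [← integral_Ioc_eq_integral_Ioo, ← intervalIntegral.integral_of_le (by linarith)]
    exact integral_besselI1_series_term b a k
  -- Only on the open interval: at `x = ±a` the left side is `besselI1 0 / 0 = 0`.
  have hseries : EqOn (fun x ↦ besselI1 (b * √(a ^ 2 - x ^ 2)) / √(a ^ 2 - x ^ 2))
      (fun x ↦ ∑' k, F b k x) (Ioo (-a) a) := fun x hx ↦ by
    dsimp only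
    rw [besselI1_mul_div b (sqrt_pos.2 (hpos hx)).ne', sq_sqrt (hpos hx).le]
  -- The norms of the terms are the terms for `|b|`, summable by the same cosh series.
  have hnorm (k : ℕ) : EqOn (fun x ↦ ‖F b k x‖) (F |b| k) (Ioo (-a) a) := fun x hx ↦ by
    simp only [F, norm_mul, norm_div, norm_pow, Real.norm_eq_abs, abs_two,
      abs_of_nonneg (hpos hx).le, Nat.abs_cast]
  have hsummable : Summable fun k ↦ ∫ x in Ioo (-a) a, ‖F b k x‖ := by
    simp only [setIntegral_congr_fun measurableSet_Ioo (hnorm _), hF_int]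
    exact (hasSum_cosh_sub_one_div (mul_ne_zero (abs_ne_zero.2 hb) ha.ne')).summable
  have hsum := hasSum_integral_of_summable_integral_norm
    (fun k ↦ (by fun_prop : Continuous (F b k)).integrableOn_Icc.mono_set Ioo_subset_Icc_self)
    hsummable
  simp only [hF_int] at hsum
  rw [intervalIntegral.integral_of_le (by linarith), integral_Ioc_eq_integral_Ioo,
    setIntegral_congr_fun measurableSet_Ioo hseries]
  exact hsum.unique (hasSum_cosh_sub_one_div (mul_ne_zero hb ha.ne'))

theorem statement13_general (lam c t x₁ x₂ : ℝ) (hlam : 0 < lam) (hc : 0 < c)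
    (hx : x₁ ^ 2 + x₂ ^ 2 < c ^ 2 * t ^ 2) :
    (∫ x₃ in (-Real.sqrt (c ^ 2 * t ^ 2 - x₁ ^ 2 - x₂ ^ 2))..
        (Real.sqrt (c ^ 2 * t ^ 2 - x₁ ^ 2 - x₂ ^ 2)),
      (lam / (2 * c)) ^ 2 * (1 / (π * Real.sinh (lam * t))) *
        besselI1 (lam / c * Real.sqrt (c ^ 2 * t ^ 2 - x₁ ^ 2 - x₂ ^ 2 - x₃ ^ 2)) /
        Real.sqrt (c ^ 2 * t ^ 2 - x₁ ^ 2 - x₂ ^ 2 - x₃ ^ 2))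
    = lam / (2 * π * c) * (1 / Real.sinh (lam * t)) *
        (Real.cosh (lam / c * Real.sqrt (c ^ 2 * t ^ 2 - x₁ ^ 2 - x₂ ^ 2)) - 1) /
        Real.sqrt (c ^ 2 * t ^ 2 - x₁ ^ 2 - x₂ ^ 2) := by
  set a := √(c ^ 2 * t ^ 2 - x₁ ^ 2 - x₂ ^ 2)
  have ha : 0 < a := sqrt_pos.2 (by linarith)
  have hA : c ^ 2 * t ^ 2 - x₁ ^ 2 - x₂ ^ 2 = a ^ 2 := (sq_sqrt (by linarith)).symm
  rw [hA]
  simp only [mul_div_assoc, intervalIntegral.integral_const_mul]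
  rw [integral_besselI1_sqrt_div_sqrt ha (div_ne_zero hlam.ne' hc.ne')]
  field_simp

/-- projection onto the plane of the absolutely continuous
component of the law of `X₃(t)`: for `x₁² + x₂² < c²t²`, with
`a = √(c²t² - x₁² - x₂²)`,
`∫_{-a}^{a} (λ/(2c))² (1/(π sinh λt)) I₁((λ/c)√(c²t²-x₁²-x₂²-x₃²))/√(c²t²-x₁²-x₂²-x₃²) dx₃
   = (λ/(2πc)) (1/sinh λt) (cosh((λ/c)a) - 1)/a`. -/
theorem statement13 (lam c t x₁ x₂ : ℝ) (hlam : 0 < lam) (hc : 0 < c) (ht : 0 < t)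
    (hx : x₁ ^ 2 + x₂ ^ 2 < c ^ 2 * t ^ 2) :
    (∫ x₃ in (-Real.sqrt (c ^ 2 * t ^ 2 - x₁ ^ 2 - x₂ ^ 2))..
        (Real.sqrt (c ^ 2 * t ^ 2 - x₁ ^ 2 - x₂ ^ 2)),
      (lam / (2 * c)) ^ 2 * (1 / (π * Real.sinh (lam * t))) *
        besselI1 (lam / c * Real.sqrt (c ^ 2 * t ^ 2 - x₁ ^ 2 - x₂ ^ 2 - x₃ ^ 2)) /
        Real.sqrt (c ^ 2 * t ^ 2 - x₁ ^ 2 - x₂ ^ 2 - x₃ ^ 2))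
    = lam / (2 * π * c) * (1 / Real.sinh (lam * t)) *
        (Real.cosh (lam / c * Real.sqrt (c ^ 2 * t ^ 2 - x₁ ^ 2 - x₂ ^ 2)) - 1) /
        Real.sqrt (c ^ 2 * t ^ 2 - x₁ ^ 2 - x₂ ^ 2) :=
  statement13_general lam c t x₁ x₂ hlam hc hx
end
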